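/- For all integers m, n, k, j ≥ 0, the (area, bounce) q,t-enumerator of doubly decorated reduced polyominoes satisfies RP_{q,t}(m∖(m+1), n)^{∘k,j} = δ_{k,0} · q^{binom(j,2)} · qbinom(m+1, j)_q · qbinom(m+n−j, m)_q, where δ_{k,0} = 1 if k = 0 and 0 otherwise, and binom(j,2) = j(j−1)/2. -/

import Mathlib

open Finset

attribute [local instance] Classical.propDecidable

noncomputable section

/-- The ring of polynomials in the two variables `q` and `t` with integer coefficients. -/
abbrev R2 : Type := MvPolynomial (Fin 2) ℤ

/-- The variable `q`. -/
def qv : R2 := MvPolynomial.X 0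

/-- The variable `t`. -/
def tv : R2 := MvPolynomial.X 1

/-- The Gaussian binomial coefficient `[N choose k]_q`, defined via the q-Pascal
recursion `[N+1, k+1]_q = [N, k]_q + q^(k+1) [N, k+1]_q`; it agrees with
`[N]_q! / ([k]_q! [N-k]_q!)` for `0 ≤ k ≤ N` and vanishes for `k > N`. -/
def qBinom : ℕ → ℕ → R2
  | _, 0 => 1
  | 0, _ + 1 => 0
  | N + 1, k + 1 => qBinom N k + qv ^ (k + 1) * qBinom N (k + 1)

/-- The Gaussian binomial coefficient with integer arguments:
it is `0` unless `0 ≤ k ≤ N`. -/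
def qBinomZ (N k : ℤ) : R2 :=
  if 0 ≤ k ∧ k ≤ N then qBinom N.toNat k.toNat else 0

/-! ## Dyck paths as step words

A lattice path is encoded as a word `w : Fin L → Bool`, where `true` is a north
step and `false` is an east step. -/

/-- The number of north steps among the first `k` steps. -/
def nBef {L : ℕ} (w : Fin L → Bool) (k : ℕ) : ℕ :=
  (univ.filter fun i : Fin L => i.1 < k ∧ w i = true).card

/-- The number of east steps among the first `k` steps. -/
def eBef {L : ℕ} (w : Fin L → Bool) (k : ℕ) : ℕ :=
  (univ.filter fun i : Fin L => i.1 < k ∧ w i = false).card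

/-- `w` is the step word of a Dyck path of size `N`: it has `N` north steps
(hence `N` east steps) and every prefix has at least as many norths as easts,
i.e. the path stays weakly above the main diagonal. -/
def IsDyckStep (N : ℕ) (w : Fin (2 * N) → Bool) : Prop :=
  nBef w (2 * N) = N ∧ ∀ k : ℕ, k ≤ 2 * N → eBef w k ≤ nBef w k

/-- A valley: a north step directly preceded by an east step. -/
def IsValleyS {L : ℕ} (w : Fin L → Bool) (i : Fin L) : Prop :=
  w i = true ∧ ∃ j : Fin L, i.1 = j.1 + 1 ∧ w j = false

/-- A peak: a north step followed by an east step, or the last (north) step. -/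
def IsPeakS {L : ℕ} (w : Fin L → Bool) (i : Fin L) : Prop :=
  w i = true ∧ ∀ j : Fin L, j.1 = i.1 + 1 → w j = false

/-- A fall: an east step immediately followed by another east step. -/
def IsFallS {L : ℕ} (w : Fin L → Bool) (i : Fin L) : Prop :=
  w i = false ∧ ∃ j : Fin L, j.1 = i.1 + 1 ∧ w j = false

/-- A fall, where additionally the last step of the path is allowed. -/
def IsFallX {L : ℕ} (w : Fin L → Bool) (i : Fin L) : Prop :=
  w i = false ∧ (i.1 + 1 = L ∨ ∃ j : Fin L, j.1 = i.1 + 1 ∧ w j = false)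

/-! ## Reduced parallelogram polyominoes: pair-of-paths model

A reduced polyomino of size `m × n` is a pair of lattice paths (red and green,
`true` = north, `false` = east) from `(0,0)` to `(m,n)`, the red one lying
always weakly above the green one. -/

/-- The number of north steps of `w` before its `c`-th east step (for `c` larger
than the number of east steps, this is the total number of north steps). -/
def Yval {L : ℕ} (w : Fin L → Bool) (c : ℕ) : ℕ :=
  (univ.filter fun i : Fin L => w i = true ∧ eBef w i.1 < c).card

/-- The number of east steps of `w` before its `k`-th north step (for `k` larger
than the number of north steps, this is the total number of east steps). -/
def Xval {L : ℕ} (w : Fin L → Bool) (k : ℕ) : ℕ :=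
  (univ.filter fun i : Fin L => w i = false ∧ nBef w i.1 < k).card

/-- `(red, green)` is a pair of paths from `(0,0)` to `(m,n)` with red weakly
above green. -/
def IsRPPair (m n : ℕ) (red green : Fin (m + n) → Bool) : Prop :=
  nBef red (m + n) = n ∧ nBef green (m + n) = n ∧
    ∀ k : ℕ, k ≤ m + n → nBef green k ≤ nBef red k

/-- A green peak: a horizontal green step immediately following a vertical
green step. -/
def IsGreenPeak {L : ℕ} (g : Fin L → Bool) (i : Fin L) : Prop :=
  g i = false ∧ ∃ j : Fin L, i.1 = j.1 + 1 ∧ g j = true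

/-- A red valley: a vertical red step immediately following a horizontal red
step; the first red step counts as a valley if it is vertical. -/
def IsRedValley {L : ℕ} (w : Fin L → Bool) (i : Fin L) : Prop :=
  w i = true ∧ (i.1 = 0 ∨ ∃ j : Fin L, i.1 = j.1 + 1 ∧ w j = false)

/-- Candidate objects: (red path, green path, decorated green peaks,
decorated red valleys). -/
abbrev RPoCand (m n : ℕ) :=
  (Fin (m + n) → Bool) × (Fin (m + n) → Bool) × Finset (Fin (m + n)) × Finset (Fin (m + n))

/-- The `k`-th corner `(p_k, h_k)` of the bounce path of a reduced polyomino: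
starting at `(0,0)` it goes east until the beginning of a vertical green step,
north until the beginning of a horizontal red step, and so on, bouncing at the
beginning of a step of either path. -/
def bncP {L : ℕ} (red green : Fin L → Bool) : ℕ → ℕ × ℕ
  | 0 => (0, 0)
  | k + 1 =>
    let p' := Xval green ((bncP red green k).2 + 1)
    (p', Yval red (p' + 1))

/-- The letter (disregarding the bar) of the bounce word carried by the
vertical bounce step in row `y`. -/
def vLabel {L : ℕ} (red green : Fin L → Bool) (y : ℕ) : ℕ :=
  ((Finset.Icc 1 L).filter fun k => (bncP red green k).2 ≤ y).card

/-- The letter of the bounce word carried by the horizontal bounce step in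
column `c`. -/
def hLabel {L : ℕ} (red green : Fin L → Bool) (c : ℕ) : ℕ :=
  ((Finset.Icc 1 L).filter fun k => (bncP red green k).1 ≤ c).card

/-- The area: the sum of the letters of the area word of the polyomino
disregarding bars, i.e. the number of whole squares lying between the two
paths. -/
def areaRPo {m n : ℕ} (x : RPoCand m n) : ℕ :=
  ∑ c ∈ Finset.Icc 1 m, (Yval x.1 c - Yval x.2.1 c)

/-- The bounce: the sum of the letters of the bounce word disregarding bars,
not counting the barred letters (vertical bounce steps) lying in the same row
as a decorated red valley, nor the unbarred letters (horizontal bounce steps)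
lying in the same column as a decorated green peak. -/
def bounceRPo {m n : ℕ} (x : RPoCand m n) : ℕ :=
  (∑ y ∈ (Finset.range n).filter
      (fun y => y ∉ x.2.2.2.image fun i => nBef x.1 i.1), vLabel x.1 x.2.1 y) +
    ∑ c ∈ (Finset.range m).filter
      (fun c => c ∉ x.2.2.1.image fun i => eBef x.2.1 i.1), hLabel x.1 x.2.1 c

/-- Membership in `RP(m∖r, n)^{∘k, j}`: a reduced polyomino of size `m × n`
with `k` decorated green peaks, `j` decorated red valleys, and exactly `r-1`
letters equal to `0` in the bounce word (the `0` letters of the bounce word are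
the horizontal steps of its initial east run). -/
def IsRPo (m n r k j : ℕ) (x : RPoCand m n) : Prop :=
  IsRPPair m n x.1 x.2.1 ∧
    (∀ i ∈ x.2.2.1, IsGreenPeak x.2.1 i) ∧ x.2.2.1.card = k ∧
    (∀ i ∈ x.2.2.2, IsRedValley x.1 i) ∧ x.2.2.2.card = j ∧
    Xval x.2.1 1 + 1 = r

/-- The `(area, bounce)` q,t-enumerator `RP_{q,t}(m∖r, n)^{∘k, j}`;
it is `0` if some parameter is negative. -/
def RPoE (m n r k j : ℤ) : R2 :=
  if 0 ≤ m ∧ 0 ≤ n ∧ 0 ≤ r ∧ 0 ≤ k ∧ 0 ≤ j then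
    ∑ x ∈ univ.filter (IsRPo m.toNat n.toNat r.toNat k.toNat j.toNat),
      qv ^ areaRPo x * tv ^ bounceRPo x
  else 0

/-!
With `r = m + 1` the bounce word starts with `m` zeros, i.e. the green path makes all its `m` east
steps before its first north step, so it is `E^m N^n`. It has no peaks (forcing `k = 0`), the
bounce path runs along it with all labels `0` (the bounce is `0`), and the area is the area under
the red path. What remains counts red paths by area, with `j` marked valleys, an initial north step
counting as a valley. Removing the first step of the path gives a recursion that closes up once one
also tracks the variant in which an initial north step is not a valley; the two variants satisfy
the recursions of `q^(binom j 2) [m + 1, j]_q [m + n - j, m]_q` and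
`q^(binom j 2) [m, j]_q [m + n - j, m]_q`, a newly created valley being accounted for by the second
q-Pascal rule.
-/

lemma qBinom_zero_right (N : ℕ) : qBinom N 0 = 1 := by
  cases N <;> rfl

lemma qBinom_succ_succ (N k : ℕ) :
    qBinom (N + 1) (k + 1) = qBinom N k + qv ^ (k + 1) * qBinom N (k + 1) := rfl

lemma qBinom_eq_zero_of_lt {N k : ℕ} (h : N < k) : qBinom N k = 0 := by
  induction N generalizing k with
  | zero => obtain ⟨k, rfl⟩ := Nat.exists_eq_add_of_lt h; rfl
  | succ N ih =>
    obtain ⟨k, rfl⟩ := Nat.exists_eq_add_of_lt (Nat.zero_lt_of_lt h)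
    rw [qBinom_succ_succ, ih (by omega), ih (by omega), mul_zero, add_zero]

lemma qBinom_self (N : ℕ) : qBinom N N = 1 := by
  induction N with
  | zero => rfl
  | succ N ih =>
    rw [qBinom_succ_succ, ih, qBinom_eq_zero_of_lt N.lt_succ_self, mul_zero, add_zero]

/-- The second q-Pascal rule `[m+1, j+1] = [m, j+1] + q^(m-j) [m, j]`, multiplied by `q^j` so
that no truncated exponent `m - j` appears. -/
lemma qBinom_succ_succ' (m j : ℕ) :
    qv ^ j * qBinom (m + 1) (j + 1) = qv ^ j * qBinom m (j + 1) + qv ^ m * qBinom m j := by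
  induction m generalizing j with
  | zero =>
    rcases j with _ | j
    · simp [qBinom_succ_succ, qBinom_zero_right, qBinom_eq_zero_of_lt]
    · simp [qBinom_eq_zero_of_lt]
  | succ m ih =>
    rcases j with _ | j
    · have h := ih 0
      have e1 := qBinom_succ_succ (m + 1) 0
      have e2 := qBinom_succ_succ m 0
      simp only [qBinom_zero_right, pow_zero, one_mul, zero_add, pow_one] at h e1 e2 ⊢
      linear_combination e1 + qv * h - e2
    · linear_combination qv ^ (j + 1) * qBinom_succ_succ (m + 1) (j + 1)
        + qv ^ (j + 2) * ih (j + 1) + qv * ih j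
        - qv ^ (m + 1) * qBinom_succ_succ m j - qv ^ (j + 1) * qBinom_succ_succ m (j + 1)

lemma qBinomZ_natCast (N k : ℕ) : qBinomZ N k = qBinom N k := by
  rcases le_or_gt k N with h | h
  · simp [qBinomZ, h]
  · rw [qBinomZ, if_neg (by omega), qBinom_eq_zero_of_lt h]

lemma qBinomZ_succ_succ (a : ℤ) (k : ℕ) :
    qBinomZ (a + 1) (k + 1) = qBinomZ a k + qv ^ (k + 1) * qBinomZ a (k + 1) := by
  rcases lt_or_ge a 0 with ha | ha
  · simp only [qBinomZ]
    rw [if_neg (by omega), if_neg (by omega), if_neg (by omega), mul_zero, add_zero]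
  · lift a to ℕ using ha
    rw [← Nat.cast_succ, ← Nat.cast_succ, qBinomZ_natCast, qBinomZ_natCast, qBinomZ_natCast,
      qBinom_succ_succ]

def valleyClosedForm (b : Bool) (M N j : ℕ) : R2 :=
  qv ^ j.choose 2 * qBinom (M + (!b).toNat) j * qBinomZ ((M : ℤ) + N - j) M

lemma qBinomZ_add_sub_succ_succ (M N j : ℕ) :
    qBinomZ (((M + 1 : ℕ) : ℤ) + ((N + 1 : ℕ) : ℤ) - j) ((M + 1 : ℕ) : ℤ) =
      qBinomZ ((M : ℤ) + ((N + 1 : ℕ) : ℤ) - j) M +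
        qv ^ (M + 1) * qBinomZ (((M + 1 : ℕ) : ℤ) + N - j) ((M + 1 : ℕ) : ℤ) := by
  convert qBinomZ_succ_succ ((M : ℤ) + N + 1 - j) M using 2 <;> push_cast <;> ring_nf

lemma valleyClosedForm_succ_succ (b : Bool) (M N j : ℕ) :
    valleyClosedForm b (M + 1) (N + 1) j =
      valleyClosedForm false M (N + 1) j + qv ^ (M + 1) * (valleyClosedForm true (M + 1) N j +
        if b = false ∧ j ≠ 0 then valleyClosedForm true (M + 1) N (j - 1) else 0) := by
  simp only [valleyClosedForm]
  rcases b with _ | _ <;> rcases j with _ | j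
  case false.succ =>
    have hZ : qBinomZ (((M + 1 : ℕ) : ℤ) + N - j) ((M + 1 : ℕ) : ℤ) =
        qBinomZ (((M + 1 : ℕ) : ℤ) + ((N + 1 : ℕ) : ℤ) - ((j + 1 : ℕ) : ℤ)) ((M + 1 : ℕ) : ℤ) := by
      congr 1; push_cast; ring
    have hc : (j + 1).choose 2 = j.choose 2 + j := by
      rw [Nat.choose_succ_succ', Nat.choose_one_right, add_comm]
    simp only [Bool.not_false, Bool.not_true, Bool.toNat_true, Bool.toNat_false, add_zero, ne_eq,
      Nat.add_sub_cancel, Nat.succ_ne_zero, not_false_eq_true, and_self, ite_true, hZ,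
      qBinomZ_add_sub_succ_succ, hc, pow_add]
    linear_combination qv ^ j.choose 2 * (qBinomZ (M + ((N + 1 : ℕ) : ℤ) - ((j + 1 : ℕ) : ℤ)) M +
      qv ^ (M + 1) * qBinomZ (((M + 1 : ℕ) : ℤ) + N - ((j + 1 : ℕ) : ℤ)) ((M + 1 : ℕ) : ℤ)) *
        qBinom_succ_succ' (M + 1) j
  all_goals
    simp only [qBinomZ_add_sub_succ_succ, Bool.not_false, Bool.not_true, Bool.toNat_true,
      Bool.toNat_false, add_zero, Bool.true_eq_false, ne_eq, not_true_eq_false, and_false,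
      false_and, if_false, qBinom_zero_right]
    ring

lemma valleyClosedForm_zero_north (b : Bool) (M j : ℕ) :
    valleyClosedForm b M 0 j = if j = 0 then 1 else 0 := by
  rcases j with _ | j
  · simp [valleyClosedForm, qBinom_zero_right, qBinomZ_natCast, qBinom_self]
  · simp only [valleyClosedForm, qBinomZ]
    rw [if_neg (show ¬(0 ≤ (M : ℤ) ∧ _) by push_cast; omega)]
    simp

lemma valleyClosedForm_zero_east (b : Bool) (N j : ℕ) :
    valleyClosedForm b 0 (N + 1) j = ((!b).toNat.choose j : R2) := by
  have hZ : qBinomZ ((0 : ℕ) + ((N + 1 : ℕ) : ℤ) - j) (0 : ℕ) = if j ≤ N + 1 then 1 else 0 := by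
    rw [qBinomZ]
    split_ifs <;> first | omega | simp [qBinom_zero_right]
  rw [valleyClosedForm, hZ]
  rcases j with _ | _ | j
  · simp [qBinom_zero_right]
  · cases b <;> simp [qBinom_self, qBinom_eq_zero_of_lt]
  · have hb : (!b).toNat < j + 2 := by cases b <;> simp
    rw [zero_add, qBinom_eq_zero_of_lt hb, Nat.choose_eq_zero_of_lt hb]
    simp

section Words

variable {L : ℕ}

lemma nBef_cons_succ (b : Bool) (w : Fin L → Bool) (k : ℕ) :
    nBef (Fin.cons b w : Fin (L + 1) → Bool) (k + 1) = b.toNat + nBef w k := by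
  cases b <;> simp [nBef, Fin.card_filter_univ_succ']

lemma eBef_zero (w : Fin L → Bool) : eBef w 0 = 0 := by
  simp [eBef]

lemma eBef_cons_succ (b : Bool) (w : Fin L → Bool) (k : ℕ) :
    eBef (Fin.cons b w : Fin (L + 1) → Bool) (k + 1) = (!b).toNat + eBef w k := by
  cases b <;> simp [eBef, Fin.card_filter_univ_succ']

lemma nBef_add_eBef (w : Fin L → Bool) (k : ℕ) : nBef w k + eBef w k = min L k := by
  have := card_filter_add_card_filter_not (s := ({i | i.1 < k} : Finset (Fin L))) (w · = true)
  simp only [filter_filter, Bool.not_eq_true] at this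
  rw [nBef, eBef, this, Fin.card_filter_val_lt]

lemma eBef_mono (w : Fin L → Bool) {k k' : ℕ} (h : k ≤ k') : eBef w k ≤ eBef w k' :=
  card_le_card fun i hi => by
    simp only [mem_filter, mem_univ, true_and] at hi ⊢
    exact ⟨by omega, hi.2⟩

lemma nBef_length (w : Fin L → Bool) : nBef w L = #{i | w i = true} := by
  simp [nBef]

lemma eBef_length (w : Fin L → Bool) : eBef w L = #{i | w i = false} := by
  simp [eBef]

lemma nBef_eq_zero_iff (w : Fin L → Bool) : nBef w L = 0 ↔ w = fun _ => false := by
  simp [nBef, filter_eq_empty_iff, funext_iff]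

lemma nBef_eq_length_iff (w : Fin L → Bool) : nBef w L = L ↔ w = fun _ => true := by
  have hsum := nBef_add_eBef w L
  have heast : eBef w L = 0 ↔ w = fun _ => true := by
    simp [eBef, filter_eq_empty_iff, funext_iff]
  rw [← heast]
  omega

lemma Yval_zero (w : Fin L → Bool) : Yval w 0 = 0 := by
  simp [Yval]

lemma Yval_cons_true (w : Fin L → Bool) {c : ℕ} (hc : c ≠ 0) :
    Yval (Fin.cons true w : Fin (L + 1) → Bool) c = 1 + Yval w c := by
  simp [Yval, Fin.card_filter_univ_succ', eBef_cons_succ, eBef_zero, Nat.pos_of_ne_zero hc]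

lemma Yval_cons_false_succ (w : Fin L → Bool) (c : ℕ) :
    Yval (Fin.cons false w : Fin (L + 1) → Bool) (c + 1) = Yval w c := by
  simp only [Yval, Fin.card_filter_univ_succ', Fin.cons_zero, Fin.cons_succ, Fin.val_succ,
    eBef_cons_succ, Bool.false_eq_true, false_and, if_false, zero_add, Bool.not_false,
    Bool.toNat_true, add_comm 1, Nat.add_lt_add_iff_right]

def areaUnder (M : ℕ) (w : Fin L → Bool) : ℕ :=
  ∑ c ∈ range M, Yval w (c + 1)

lemma areaUnder_cons_true (M : ℕ) (w : Fin L → Bool) :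
    areaUnder M (Fin.cons true w : Fin (L + 1) → Bool) = M + areaUnder M w := by
  simp [areaUnder, Yval_cons_true, sum_add_distrib]

lemma areaUnder_cons_false (M : ℕ) (w : Fin L → Bool) :
    areaUnder M (Fin.cons false w : Fin (L + 1) → Bool) = areaUnder (M - 1) w := by
  rcases M with _ | M
  · rfl
  · simp [areaUnder, Yval_cons_false_succ, sum_range_succ', Yval_zero]

lemma areaUnder_const_false (M : ℕ) : areaUnder M (fun _ : Fin L => false) = 0 := by
  simp [areaUnder, Yval]

/-- `Fin.cons b w i.castSucc` is the letter preceding `w i` in the word `b :: w`. -/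
def valleysAfter (b : Bool) (w : Fin L → Bool) : ℕ :=
  #{i | w i = true ∧ (Fin.cons b w : Fin (L + 1) → Bool) i.castSucc = false}

lemma valleysAfter_cons (b c : Bool) (w : Fin L → Bool) :
    valleysAfter b (Fin.cons c w : Fin (L + 1) → Bool) = (!b && c).toNat + valleysAfter c w := by
  cases b <;> cases c <;>
    simp [valleysAfter, Fin.card_filter_univ_succ']

lemma valleysAfter_const_false (b : Bool) : valleysAfter b (fun _ : Fin L => false) = 0 := by
  simp [valleysAfter]

lemma valleysAfter_const_true (b : Bool) :
    valleysAfter b (fun _ : Fin (L + 1) => true) = (!b).toNat := by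
  cases b <;> simp [valleysAfter, Fin.card_filter_univ_succ']

lemma isRedValley_iff (w : Fin L → Bool) (i : Fin L) :
    IsRedValley w i ↔
      w i = true ∧ (Fin.cons false w : Fin (L + 1) → Bool) i.castSucc = false := by
  rcases L with _ | L
  · exact i.elim0
  refine Fin.cases (by simp [IsRedValley]) (fun k => ?_) i
  have hprev : (∃ j : Fin (L + 1), k.1 = j.1 ∧ w j = false) ↔ w k.castSucc = false :=
    ⟨fun ⟨j, hj, h⟩ => (Fin.ext hj.symm : j = k.castSucc) ▸ h, fun h => ⟨k.castSucc, rfl, h⟩⟩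
  simp [IsRedValley, hprev]

lemma card_redValleys (w : Fin L → Bool) : #{i | IsRedValley w i} = valleysAfter false w := by
  simp only [valleysAfter, isRedValley_iff]

lemma sum_fin_cons_bool {β : Type*} [AddCommMonoid β] (F : (Fin (L + 1) → Bool) → β) :
    ∑ w, F w =
      ∑ w : Fin L → Bool, F (Fin.cons false w) + ∑ w : Fin L → Bool, F (Fin.cons true w) := by
  rw [← (Fin.consEquiv fun _ => Bool).sum_comp, Fintype.sum_prod_type, Fintype.sum_bool, add_comm]
  rfl

end Words

def valleySum (b : Bool) (L N M j : ℕ) : R2 :=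
  ∑ w : Fin L → Bool with nBef w L = N, ((valleysAfter b w).choose j : R2) * qv ^ areaUnder M w

lemma choose_not_toNat_add (b : Bool) (v j : ℕ) :
    ((!b).toNat + v).choose j =
      v.choose j + if b = false ∧ j ≠ 0 then v.choose (j - 1) else 0 := by
  cases b <;> rcases j with _ | j <;> simp [add_comm 1, Nat.choose_succ_succ', add_comm]

lemma valleySum_succ_succ (b : Bool) (L N M j : ℕ) :
    valleySum b (L + 1) (N + 1) M j =
      valleySum false L (N + 1) (M - 1) j + qv ^ M * (valleySum true L N M j +
        if b = false ∧ j ≠ 0 then valleySum true L N M (j - 1) else 0) := by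
  simp only [valleySum, sum_filter]
  rw [sum_fin_cons_bool]
  simp only [nBef_cons_succ, valleysAfter_cons, areaUnder_cons_false, areaUnder_cons_true,
    Bool.and_false, Bool.and_true, Bool.toNat_false, Bool.toNat_true, zero_add,
    choose_not_toNat_add]
  congr 1
  by_cases hbj : b = false ∧ j ≠ 0
  · simp only [hbj, ne_eq, not_false_eq_true, and_self, if_true]
    rw [← sum_add_distrib, mul_sum]
    refine sum_congr rfl fun w _ => ?_
    split_ifs <;> first | omega | (push_cast; ring)
  · simp only [hbj, if_false, add_zero, mul_sum]
    refine sum_congr rfl fun w _ => ?_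
    split_ifs <;> first | omega | ring

lemma valleySum_zero_north (b : Bool) (L M j : ℕ) :
    valleySum b L 0 M j = if j = 0 then 1 else 0 := by
  have : ({w | nBef w L = 0} : Finset (Fin L → Bool)) = {fun _ => false} := by
    ext w; simp [nBef_eq_zero_iff]
  rw [valleySum, this, sum_singleton, valleysAfter_const_false, areaUnder_const_false]
  rcases j with _ | j <;> simp

lemma valleySum_zero_east (b : Bool) (N j : ℕ) :
    valleySum b (N + 1) (N + 1) 0 j = ((!b).toNat.choose j : R2) := by
  have : ({w | nBef w (N + 1) = N + 1} : Finset (Fin (N + 1) → Bool)) = {fun _ => true} := by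
    ext w; simp [nBef_eq_length_iff]
  simp [valleySum, this, valleysAfter_const_true, areaUnder]

theorem valleySum_eq_valleyClosedForm (b : Bool) {L M N : ℕ} (h : M + N = L) (j : ℕ) :
    valleySum b L N M j = valleyClosedForm b M N j := by
  induction L generalizing b M N j with
  | zero =>
    obtain rfl : N = 0 := by omega
    rw [valleySum_zero_north, valleyClosedForm_zero_north]
  | succ L ih =>
    rcases N with _ | N
    · rw [valleySum_zero_north, valleyClosedForm_zero_north]
    rcases M with _ | M
    · obtain rfl : N = L := by omega
      rw [valleySum_zero_east, valleyClosedForm_zero_east]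
    rw [valleySum_succ_succ, valleyClosedForm_succ_succ, Nat.add_sub_cancel,
      ih false (by omega), ih true (by omega), ih true (by omega)]

section Polyomino

variable {M N : ℕ}

def eastThenNorth (M N : ℕ) : Fin (M + N) → Bool := fun i => decide (M ≤ i.1)

lemma eBef_eastThenNorth (k : ℕ) : eBef (eastThenNorth M N) k = min k M := by
  have : ({i : Fin (M + N) | i.1 < k ∧ eastThenNorth M N i = false} : Finset _) =
      ({i : Fin (M + N) | i.1 < min k M} : Finset _) := by
    ext i; simp [eastThenNorth]
  rw [eBef, this, Fin.card_filter_val_lt]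
  omega

lemma nBef_eastThenNorth (k : ℕ) : nBef (eastThenNorth M N) k = min (M + N) k - M := by
  have := nBef_add_eBef (eastThenNorth M N) k
  rw [eBef_eastThenNorth] at this
  omega

lemma Xval_eastThenNorth {c : ℕ} (hc : c ≠ 0) : Xval (eastThenNorth M N) c = M := by
  have : ({i : Fin (M + N) | eastThenNorth M N i = false ∧ nBef (eastThenNorth M N) i.1 < c} :
      Finset _) = ({i : Fin (M + N) | i.1 < M} : Finset _) := by
    ext i; simp [eastThenNorth, nBef_eastThenNorth]; omega
  rw [Xval, this, Fin.card_filter_val_lt]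
  omega

lemma Yval_eastThenNorth {c : ℕ} (hc : c ≤ M) : Yval (eastThenNorth M N) c = 0 := by
  simp [Yval, eastThenNorth, eBef_eastThenNorth]
  omega

lemma not_isGreenPeak_eastThenNorth (i : Fin (M + N)) : ¬IsGreenPeak (eastThenNorth M N) i := by
  rintro ⟨hi, j, hij, hj⟩
  simp [eastThenNorth] at hi hj
  omega

lemma isRPPair_eastThenNorth {red : Fin (M + N) → Bool} (hred : nBef red (M + N) = N) :
    IsRPPair M N red (eastThenNorth M N) := by
  refine ⟨hred, by rw [nBef_eastThenNorth]; omega, fun k hk => ?_⟩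
  have := nBef_add_eBef red k
  have := nBef_add_eBef red (M + N)
  have := eBef_mono red hk
  rw [nBef_eastThenNorth]
  omega

lemma eq_eastThenNorth {green : Fin (M + N) → Bool} (hN : nBef green (M + N) = N)
    (hX : Xval green 1 = M) : green = eastThenNorth M N := by
  have hE : #{i | green i = false} = M := by
    have := nBef_add_eBef green (M + N)
    rw [← eBef_length]
    omega
  have hfirst : ∀ i, green i = false → nBef green i.1 = 0 := by
    have : ({i : Fin (M + N) | green i = false ∧ nBef green i.1 < 1} : Finset _) =
        ({i | green i = false} : Finset _) :=
      eq_of_subset_of_card_le (fun i hi => (mem_filter.mpr ⟨mem_univ i, (mem_filter.mp hi).2.1⟩))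
        (by rw [hE]; exact hX.ge)
    intro i hi
    have := (Finset.ext_iff.mp this i).mpr (by simpa using hi)
    simp only [mem_filter, mem_univ, true_and] at this
    omega
  have hclosed : ∀ i j : Fin (M + N), j ≤ i → green i = false → green j = false := by
    intro i j hji hi
    by_contra hj
    have hji' : j < i := lt_of_le_of_ne hji fun h => by simp [h, hi] at hj
    have h0 := hfirst i hi
    rw [nBef, card_eq_zero, filter_eq_empty_iff] at h0
    exact h0 (mem_univ j) ⟨hji', by simpa using hj⟩
  funext i
  have := Fin.lt_card_filter_univ_iff_apply_of_imp (j := i) (fun k => green k = false) hclosed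
  rw [hE] at this
  cases h : green i <;> simp_all [eastThenNorth]

lemma Yval_succ_of_nBef {red : Fin (M + N) → Bool} (hred : nBef red (M + N) = N) :
    Yval red (M + 1) = N := by
  have hE : eBef red (M + N) = M := by
    have := nBef_add_eBef red (M + N)
    omega
  have : ({i : Fin (M + N) | red i = true ∧ eBef red i.1 < M + 1} : Finset _) =
      ({i | red i = true} : Finset _) := by
    ext i
    have := eBef_mono red i.2.le
    simp only [mem_filter, mem_univ, true_and, and_iff_left_iff_imp]
    omega
  rw [Yval, this, ← nBef_length, hred]

lemma bncP_eastThenNorth {red : Fin (M + N) → Bool} (hred : nBef red (M + N) = N) (k : ℕ) :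
    bncP red (eastThenNorth M N) (k + 1) = (M, N) := by
  simp only [bncP, Xval_eastThenNorth (Nat.succ_ne_zero _), Yval_succ_of_nBef hred]

lemma bounceRPo_eastThenNorth {red : Fin (M + N) → Bool} (hred : nBef red (M + N) = N)
    (P V : Finset (Fin (M + N))) :
    bounceRPo ((red, eastThenNorth M N, P, V) : RPoCand M N) = 0 := by
  have hcorner : ∀ k ∈ Icc 1 (M + N), bncP red (eastThenNorth M N) k = (M, N) := by
    intro k hk
    obtain ⟨k, rfl⟩ : ∃ k', k = k' + 1 := ⟨k - 1, by simp at hk; omega⟩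
    exact bncP_eastThenNorth hred k
  have hv : ∀ y < N, vLabel red (eastThenNorth M N) y = 0 := fun y hy =>
    card_eq_zero.mpr <| filter_eq_empty_iff.mpr fun k hk => by rw [hcorner k hk]; simpa using hy
  have hh : ∀ c < M, hLabel red (eastThenNorth M N) c = 0 := fun c hc =>
    card_eq_zero.mpr <| filter_eq_empty_iff.mpr fun k hk => by rw [hcorner k hk]; simpa using hc
  rw [bounceRPo, sum_eq_zero fun y hy => hv y (mem_range.mp (mem_filter.mp hy).1),
    sum_eq_zero fun c hc => hh c (mem_range.mp (mem_filter.mp hc).1), add_zero]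

lemma areaRPo_eastThenNorth (red : Fin (M + N) → Bool) (P V : Finset (Fin (M + N))) :
    areaRPo ((red, eastThenNorth M N, P, V) : RPoCand M N) = areaUnder M red := by
  rw [areaRPo, areaUnder, range_eq_Ico, sum_Ico_add', zero_add, Ico_add_one_right_eq_Icc]
  refine sum_congr rfl fun c hc => ?_
  rw [Yval_eastThenNorth (mem_Icc.mp hc).2, Nat.sub_zero]

lemma isRPo_succ_iff {K J : ℕ} {x : RPoCand M N} :
    IsRPo M N (M + 1) K J x ↔ nBef x.1 (M + N) = N ∧ x.2.1 = eastThenNorth M N ∧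
      x.2.2.1 = ∅ ∧ K = 0 ∧ x.2.2.2 ∈ powersetCard J {i | IsRedValley x.1 i} := by
  obtain ⟨red, green, P, V⟩ := x
  simp only [IsRPo, mem_powersetCard]
  constructor
  · rintro ⟨⟨hred, hgreen, -⟩, hP, rfl, hV, rfl, hX⟩
    obtain rfl := eq_eastThenNorth hgreen (by omega)
    obtain rfl : P = ∅ :=
      eq_empty_of_forall_notMem fun i hi => not_isGreenPeak_eastThenNorth i (hP i hi)
    exact ⟨hred, rfl, rfl, rfl, fun i hi => by simpa using hV i hi, rfl⟩
  · rintro ⟨hred, rfl, rfl, rfl, hV, rfl⟩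
    exact ⟨isRPPair_eastThenNorth hred, by simp, rfl, fun i hi => by simpa using hV hi, rfl,
      by rw [Xval_eastThenNorth one_ne_zero]⟩

lemma sum_RPo_succ (K J : ℕ) :
    ∑ x ∈ univ.filter (IsRPo M N (M + 1) K J), qv ^ areaRPo x * tv ^ bounceRPo x =
      if K = 0 then valleySum false (M + N) N M J else 0 := by
  split_ifs with hK
  · subst hK
    have : valleySum false (M + N) N M J = ∑ red : Fin (M + N) → Bool with nBef red (M + N) = N,
        ∑ _V ∈ powersetCard J {i | IsRedValley red i}, qv ^ areaUnder M red := by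
      simp [valleySum, card_redValleys]
    rw [this, sum_sigma']
    refine sum_bij' (fun x _ => ⟨x.1, x.2.2.2⟩) (fun p _ => (p.1, eastThenNorth M N, ∅, p.2))
      ?_ ?_ ?_ ?_ ?_
    · intro x hx
      obtain ⟨hred, -, -, -, hV⟩ := isRPo_succ_iff.mp (mem_filter.mp hx).2
      simpa [mem_sigma, hred] using hV
    · rintro ⟨red, V⟩ hp
      simp only [mem_sigma, mem_filter, mem_univ, true_and] at hp
      simpa [isRPo_succ_iff] using hp
    · rintro ⟨red, green, P, V⟩ hx
      obtain ⟨-, rfl, rfl, -⟩ := isRPo_succ_iff.mp (mem_filter.mp hx).2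
      rfl
    · intro p _
      rfl
    · rintro ⟨red, green, P, V⟩ hx
      obtain ⟨hred, rfl, -⟩ := isRPo_succ_iff.mp (mem_filter.mp hx).2
      rw [areaRPo_eastThenNorth, bounceRPo_eastThenNorth hred, pow_zero, mul_one]
  · exact sum_eq_zero fun x hx => absurd (isRPo_succ_iff.mp (mem_filter.mp hx).2).2.2.2.1 hK

end Polyomino

lemma toNat_mul_sub_one_div_two (j : ℕ) : ((j : ℤ) * (j - 1) / 2).toNat = j.choose 2 := by
  rcases j with _ | j
  · simp
  · rw [Nat.choose_two_right, Nat.add_sub_cancel,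
      show ((j + 1 : ℕ) : ℤ) * ((j + 1 : ℕ) - 1) = (((j + 1) * j : ℕ) : ℤ) by push_cast; ring]
    omega

/-- For `m, n, k, j ≥ 0`, the `(area, bounce)` q,t-enumerator
of doubly decorated reduced polyominoes satisfies
`RP_{q,t}(m∖(m+1), n)^{∘k,j}
  = δ_{k,0} ⬝ q^(binom j 2) ⬝ [m+1 choose j]_q ⬝ [m+n-j choose m]_q`. -/
theorem RPo_base (m n k j : ℤ) (hm : 0 ≤ m) (hn : 0 ≤ n) (hk : 0 ≤ k) (hj : 0 ≤ j) :
    RPoE m n (m + 1) k j =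
      (if k = 0 then 1 else 0) * qv ^ (j * (j - 1) / 2).toNat *
        qBinomZ (m + 1) j * qBinomZ (m + n - j) m := by
  lift m to ℕ using hm
  lift n to ℕ using hn
  lift k to ℕ using hk
  lift j to ℕ using hj
  rw [RPoE, if_pos (by omega), ← Nat.cast_succ]
  simp only [Int.toNat_natCast, sum_RPo_succ, toNat_mul_sub_one_div_two, qBinomZ_natCast,
    Nat.cast_eq_zero]
  split_ifs
  · rw [valleySum_eq_valleyClosedForm false rfl, valleyClosedForm]
    simp
  · simp
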